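/- Suppose G is a fully-connected multilayer perceptron: its node set V is partitioned into layers L_0 = V_I, L_1, …, L_k, L_{k+1} = V_O with k ≥ 1, its edge set E consists exactly of all pairs (u, w) with u ∈ L_i and w ∈ L_{i+1} for 0 ≤ i ≤ k, and every hidden layer satisfies |L_i| ≥ 2 for 1 ≤ i ≤ k. Then for every c ∈ ℝ^{Ṽ}, the invariant set H_G(c) is a connected subset of ℝ^E if and only if c_v ≥ 0 for every out-bottleneck v and c_v ≤ 0 for every in-bottleneck v. -/

import Mathlib

/-!
`H_G(c)` is the set of `θ` with `θ² ∈ P`, where `P = {x | B̃ x = c}` is an affine subspace.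
If every coordinate hyperplane `{x_e = 0}` meets `P` inside the nonnegative orthant, all sign
patterns `±√x` can be connected: along a segment of `P ∩ ℝ^E_{≥0}` the sign of `θ` is kept
fixed, and at a point with `x_e = 0` the sign of coordinate `e` can be flipped for free.
Conversely, an out-bottleneck `v` with `c_v < 0` (or an in-bottleneck with `c_v > 0`) forces
its unique outgoing (incoming) edge to carry a nonzero weight, whose sign then splits `H_G(c)`.
For the MLP, `c` lies in the cone spanned by the columns of `B̃` other than any given edge
`(a, b)`: a flow of `c_v > 0` from the inputs into `v`, or of `-c_v > 0` from `v` to the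
outputs, can be routed through nodes different from `a` and `b` because every hidden layer has
two nodes; the only obstruction, a bottleneck `v` whose single edge is `(a, b)`, is excluded by
the sign conditions.
-/

noncomputable section

open Matrix Finset

/-- A finite DAG modeling a feed-forward neural architecture: nodes `V`,
edges `edges`, input nodes `VI` (no incoming edges), output nodes `VO`
(no outgoing edges), with `VI` and `VO` disjoint. -/
structure DagNet where
  V : Type
  [fintypeV : Fintype V]
  [decEqV : DecidableEq V]
  edges : Finset (V × V)
  VI : Finset V
  VO : Finset V
  acyclic : ∀ v : V, ¬ Relation.TransGen (fun a b : V => (a, b) ∈ edges) v v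
  no_edge_into_input : ∀ e ∈ edges, Prod.snd e ∉ VI
  no_edge_from_output : ∀ e ∈ edges, Prod.fst e ∉ VO
  io_disjoint : Disjoint VI VO

attribute [instance] DagNet.fintypeV DagNet.decEqV

namespace DagNet

variable (G : DagNet)

/-- The hidden nodes `Ṽ = V \ (V_I ∪ V_O)`. -/
def hidden : Finset G.V := Finset.univ \ (G.VI ∪ G.VO)

/-- The type of hidden nodes. -/
abbrev Hidden : Type := {v : G.V // v ∈ G.hidden}

/-- The type of edges. -/
abbrev Edge : Type := {e : G.V × G.V // e ∈ G.edges}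

/-- The incidence matrix `B̃` of `G` restricted to hidden rows:
`B̃_{v,(i,j)} = 1` if `v = j`, `-1` if `v = i`, `0` otherwise. -/
def B : Matrix G.Hidden G.Edge ℝ :=
  Matrix.of fun v e =>
    if (e : G.V × G.V).2 = (v : G.V) then 1
    else if (e : G.V × G.V).1 = (v : G.V) then -1 else 0

/-- The rescaling action `T^v_α`: multiplies by `α` the weight of every edge
entering `v`, by `α⁻¹` the weight of every edge leaving `v`, and leaves the
other coordinates unchanged. -/
def rescale (v : G.V) (α : ℝ) (θ : EuclideanSpace ℝ G.Edge) :
    EuclideanSpace ℝ G.Edge :=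
  WithLp.toLp 2 fun (e : G.Edge) => if (e : G.V × G.V).2 = v then α * θ e
    else if (e : G.V × G.V).1 = v then α⁻¹ * θ e else θ e

/-- `Reaches a b` iff there is a directed path (possibly trivial) from `a` to `b`. -/
def Reaches (a b : G.V) : Prop :=
  Relation.ReflTransGen (fun x y : G.V => (x, y) ∈ G.edges) a b

/-- The invariant set `H_G(c) = {θ : B̃ θ² = c}` inside Euclidean space `ℝ^E`. -/
def invariantSet (c : G.Hidden → ℝ) : Set (EuclideanSpace ℝ G.Edge) :=
  {θ | G.B.mulVec (fun e => θ e ^ 2) = c}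

/-- `u : Fin (k+1) → V` is a directed path in `G`. -/
def IsPathFun {k : ℕ} (u : Fin (k + 1) → G.V) : Prop :=
  ∀ i : Fin k, (u i.castSucc, u i.succ) ∈ G.edges

/-- Pure ancestors of `v`: hidden ancestors `w` of `v` such that every directed
path from `w` to an output node passes through `v` (this contains `v` itself
whenever `v` is hidden). -/
def pureAnc (v : G.V) : Set G.V :=
  {w | w ∈ G.hidden ∧ G.Reaches w v ∧
    ∀ (k : ℕ) (u : Fin (k + 1) → G.V), G.IsPathFun u → u 0 = w →
      u (Fin.last k) ∈ G.VO → ∃ i, u i = v}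

/-- Pure descendants of `v`: hidden descendants `w` of `v` such that every
directed path from an input node to `w` passes through `v`. -/
def pureDesc (v : G.V) : Set G.V :=
  {w | w ∈ G.hidden ∧ G.Reaches v w ∧
    ∀ (k : ℕ) (u : Fin (k + 1) → G.V), G.IsPathFun u → u (Fin.last k) = w →
      u 0 ∈ G.VI → ∃ i, u i = v}

/-- An out-bottleneck: a hidden node with exactly one outgoing edge. -/
def OutBottleneck (v : G.V) : Prop :=
  v ∈ G.hidden ∧ (G.edges.filter (fun e => e.1 = v)).card = 1

/-- An in-bottleneck: a hidden node with exactly one incoming edge. -/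
def InBottleneck (v : G.V) : Prop :=
  v ∈ G.hidden ∧ (G.edges.filter (fun e => e.2 = v)).card = 1

/-- The projection sending each hidden node to itself and each
input/output node to the glued point `⋆ = none`. -/
def pi (v : G.V) : Option G.Hidden :=
  if h : v ∈ G.hidden then some ⟨v, h⟩ else none

/-- The undirected graph on `Ṽ ⊔ {⋆}` with an edge between `π(u)` and `π(w)`
for each edge `(u,w)` of `G` with nonzero weight. -/
def quotGraph (θ : G.Edge → ℝ) : SimpleGraph (Option G.Hidden) :=
  SimpleGraph.fromRel (fun a b => ∃ e : G.Edge, θ e ≠ 0 ∧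
    a = G.pi (e : G.V × G.V).1 ∧ b = G.pi (e : G.V × G.V).2)

end DagNet

section SignedSquareRoots

variable {ι : Type*} {P : Set (ι → ℝ)}

def sqPreimage (P : Set (ι → ℝ)) : Set (EuclideanSpace ℝ ι) :=
  {θ | (fun i => θ i ^ 2) ∈ P}

section

variable [DecidableEq ι]

def signedSqrt (s : Finset ι) (x : ι → ℝ) : EuclideanSpace ℝ ι :=
  WithLp.toLp 2 fun i => (if i ∈ s then -1 else 1) * √(x i)

theorem continuous_signedSqrt (s : Finset ι) : Continuous (signedSqrt s) := by
  unfold signedSqrt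
  fun_prop

theorem signedSqrt_mem_sqPreimage (s : Finset ι) {x : ι → ℝ} (hx : x ∈ P)
    (hx₀ : 0 ≤ x) : signedSqrt s x ∈ sqPreimage P := by
  change (fun i => signedSqrt s x i ^ 2) ∈ P
  convert hx using 1
  funext i
  simp only [signedSqrt, PiLp.toLp_apply, mul_pow, Real.sq_sqrt (hx₀ i)]
  split_ifs <;> norm_num

theorem signedSqrt_sq [Fintype ι] (θ : EuclideanSpace ℝ ι) :
    signedSqrt {i | θ i < 0} (fun i => θ i ^ 2) = θ := by
  ext i
  simp only [signedSqrt, PiLp.toLp_apply, Finset.mem_filter, Finset.mem_univ, true_and,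
    Real.sqrt_sq_eq_abs]
  split_ifs with h
  · rw [abs_of_neg h]; ring
  · rw [abs_of_nonneg (not_lt.1 h)]; ring

theorem signedSqrt_insert_of_eq_zero (s : Finset ι) {x : ι → ℝ} {i : ι} (hx : x i = 0) :
    signedSqrt (insert i s) x = signedSqrt s x := by
  ext j
  by_cases hj : j = i
  · simp [signedSqrt, hj, hx]
  · simp [signedSqrt, hj]

theorem joinedIn_signedSqrt (hP : Convex ℝ P) (s : Finset ι) {x y : ι → ℝ}
    (hx : x ∈ P) (hx₀ : 0 ≤ x) (hy : y ∈ P) (hy₀ : 0 ≤ y) :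
    JoinedIn (sqPreimage P) (signedSqrt s x) (signedSqrt s y) := by
  have hQ : IsPathConnected (signedSqrt s '' (P ∩ Set.Ici 0)) :=
    ((hP.inter (convex_Ici 0)).isPathConnected ⟨x, hx, hx₀⟩).image (continuous_signedSqrt s)
  refine (hQ.joinedIn _ ⟨x, ⟨hx, hx₀⟩, rfl⟩ _ ⟨y, ⟨hy, hy₀⟩, rfl⟩).mono ?_
  rintro _ ⟨z, ⟨hz, hz₀⟩, rfl⟩
  exact signedSqrt_mem_sqPreimage s hz hz₀

end

theorem isPathConnected_sqPreimage [Fintype ι] [Nonempty ι] (hP : Convex ℝ P)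
    (hzero : ∀ i, ∃ x ∈ P, 0 ≤ x ∧ x i = 0) : IsPathConnected (sqPreimage P) := by
  classical
  obtain ⟨x, hx, hx₀, -⟩ := hzero (Classical.arbitrary ι)
  have hflip : ∀ s, JoinedIn (sqPreimage P) (signedSqrt ∅ x) (signedSqrt s x) := by
    intro s
    induction s using Finset.induction_on with
    | empty => exact JoinedIn.refl (signedSqrt_mem_sqPreimage ∅ hx hx₀)
    | insert i s _ ih =>
      obtain ⟨y, hy, hy₀, hyi⟩ := hzero i
      have hto := joinedIn_signedSqrt hP s hx hx₀ hy hy₀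
      have hfrom := joinedIn_signedSqrt hP (insert i s) hy hy₀ hx hx₀
      rw [signedSqrt_insert_of_eq_zero s hyi] at hfrom
      exact ih.trans (hto.trans hfrom)
  refine ⟨signedSqrt ∅ x, signedSqrt_mem_sqPreimage ∅ hx hx₀, fun {θ} hθ => ?_⟩
  have h := (hflip {i | θ i < 0}).trans
    (joinedIn_signedSqrt hP {i | θ i < 0} hx hx₀ hθ fun i => sq_nonneg (θ i))
  rwa [signedSqrt_sq] at h

/-- Reflecting coordinate `i` preserves `sqPreimage P`, so the values `θ i` on a connected
`sqPreimage P` form an interval symmetric about `0`. -/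
theorem not_isConnected_sqPreimage {i : ι} (h : ∀ θ ∈ sqPreimage P, θ i ≠ 0) :
    ¬IsConnected (sqPreimage P) := by
  classical
  rintro ⟨⟨θ, hθ⟩, hconn⟩
  let θ' : EuclideanSpace ℝ ι := WithLp.toLp 2 fun j => if j = i then -θ j else θ j
  have hθ' : θ' ∈ sqPreimage P := by
    have hsq : (fun j => θ' j ^ 2) = fun j => θ j ^ 2 := by
      funext j
      by_cases hj : j = i <;> simp [θ', hj]
    change (fun j => θ' j ^ 2) ∈ P
    rwa [hsq]
  have hI := hconn.image (fun θ : EuclideanSpace ℝ ι => θ i) (by fun_prop)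
  have h₀ : (0 : ℝ) ∈ (fun θ : EuclideanSpace ℝ ι => θ i) '' sqPreimage P := by
    have hθi : θ' i = -θ i := by simp [θ']
    rcases le_total 0 (θ i) with hpos | hneg
    · exact hI.Icc_subset ⟨θ', hθ', hθi⟩ ⟨θ, hθ, rfl⟩ ⟨by linarith, hpos⟩
    · exact hI.Icc_subset ⟨θ, hθ, rfl⟩ ⟨θ', hθ', hθi⟩ ⟨hneg, by linarith⟩
  obtain ⟨θ₀, hθ₀, hθ₀i⟩ := h₀
  exact h θ₀ hθ₀ hθ₀i

end SignedSquareRoots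

theorem exists_layer_eq_ne_ne {α : Type*} [Fintype α] {layer : α → ℕ} {j : ℕ}
    (h : 2 ≤ (univ.filter fun v => layer v = j).card) {a b : α} (hab : layer a ≠ layer b) :
    ∃ u, layer u = j ∧ u ≠ a ∧ u ≠ b := by
  by_cases ha : layer a = j
  · obtain ⟨u, hu, hua⟩ := exists_mem_ne h a
    have hu := (mem_filter.1 hu).2
    exact ⟨u, hu, hua, fun hub => hab (by rw [ha, ← hu, hub])⟩
  · obtain ⟨u, hu, hub⟩ := exists_mem_ne h b
    have hu := (mem_filter.1 hu).2
    exact ⟨u, hu, fun hua => ha (hua ▸ hu), hub⟩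

namespace DagNet

variable (G : DagNet)

theorem invariantSet_eq_sqPreimage (c : G.Hidden → ℝ) :
    G.invariantSet c = sqPreimage {x | G.B *ᵥ x = c} :=
  rfl

theorem fst_ne_snd (e : G.Edge) : e.1.1 ≠ e.1.2 := fun h =>
  G.acyclic e.1.1 (Relation.TransGen.single (by nth_rewrite 2 [h]; exact e.2))

theorem B_mulVec_apply (x : G.Edge → ℝ) {v : G.V} (hv : v ∈ G.hidden) :
    (G.B *ᵥ x) ⟨v, hv⟩ =
      ∑ e ∈ univ.filter (fun e : G.Edge => e.1.2 = v), x e -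
        ∑ e ∈ univ.filter (fun e : G.Edge => e.1.1 = v), x e := by
  rw [mulVec, dotProduct, sum_filter, sum_filter, ← sum_sub_distrib]
  refine sum_congr rfl fun e _ => ?_
  by_cases h₂ : e.1.2 = v
  · have h₁ : e.1.1 ≠ v := fun h₁ => G.fst_ne_snd e (h₁.trans h₂.symm)
    simp [B, h₂, h₁]
  · by_cases h₁ : e.1.1 = v <;> simp [B, h₂, h₁]

def nodeVec (w : G.V) : G.Hidden → ℝ := fun v => if w = v then 1 else 0

theorem nodeVec_eq_zero {w : G.V} (hw : w ∉ G.hidden) : G.nodeVec w = 0 := by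
  funext v
  exact if_neg fun (h : w = v) => hw (h ▸ v.2)

theorem B_mulVec_single (e : G.Edge) :
    G.B *ᵥ Pi.single e 1 = G.nodeVec e.1.2 - G.nodeVec e.1.1 := by
  funext v
  have hne := G.fst_ne_snd e
  rw [mulVec_single_one]
  by_cases h₂ : e.1.2 = v
  · have h₁ : e.1.1 ≠ v := fun h₁ => hne (h₁.trans h₂.symm)
    simp [B, nodeVec, h₂, h₁]
  · by_cases h₁ : e.1.1 = v <;> simp [B, nodeVec, h₂, h₁]

def flowCone (e₀ : G.Edge) : PointedCone ℝ (G.Hidden → ℝ) where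
  carrier := {d | ∃ x, G.B *ᵥ x = d ∧ 0 ≤ x ∧ x e₀ = 0}
  add_mem' := by
    rintro _ _ ⟨x, rfl, hx, hxe⟩ ⟨y, rfl, hy, hye⟩
    exact ⟨x + y, mulVec_add _ _ _, add_nonneg hx hy, by simp [hxe, hye]⟩
  zero_mem' := ⟨0, mulVec_zero _, le_rfl, rfl⟩
  smul_mem' := by
    rintro ⟨t, ht⟩ _ ⟨x, rfl, hx, hxe⟩
    exact ⟨t • x, mulVec_smul _ _ _, smul_nonneg ht hx, by simp [hxe]⟩

theorem sub_mem_flowCone {e₀ : G.Edge} {u w : G.V} (h : (u, w) ∈ G.edges)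
    (hne : (u, w) ≠ e₀.1) :
    G.nodeVec w - G.nodeVec u ∈ G.flowCone e₀ :=
  ⟨Pi.single ⟨(u, w), h⟩ 1, G.B_mulVec_single ⟨(u, w), h⟩, Pi.single_nonneg.2 zero_le_one,
    Pi.single_eq_of_ne (fun h' => hne (congrArg Subtype.val h').symm) _⟩

variable {G}

theorem exists_filter_eq_singleton {p : G.V × G.V → Prop} [DecidablePred p]
    (h : (G.edges.filter p).card = 1) :
    ∃ e : G.Edge, univ.filter (fun e : G.Edge => p e.1) = {e} := by
  obtain ⟨q, hq⟩ := card_eq_one.1 h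
  have hqE := (mem_filter.1 (hq ▸ mem_singleton_self q)).1
  refine ⟨⟨q, hqE⟩, ext fun e => ?_⟩
  simpa [Subtype.ext_iff, e.2] using Finset.ext_iff.1 hq e.1

theorem exists_forall_ne_zero_of_outBottleneck {c : G.Hidden → ℝ} {v : G.V}
    (hv : G.OutBottleneck v) (hc : c ⟨v, hv.1⟩ < 0) :
    ∃ e : G.Edge, ∀ θ ∈ G.invariantSet c, θ e ≠ 0 := by
  obtain ⟨e, he⟩ := G.exists_filter_eq_singleton hv.2
  refine ⟨e, fun θ hθ hθe => hc.not_ge ?_⟩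
  have hrow := G.B_mulVec_apply (fun e => θ e ^ 2) hv.1
  rw [hθ, he, sum_singleton, hθe] at hrow
  rw [hrow]
  simpa using sum_nonneg fun e _ => sq_nonneg (θ e)

theorem exists_forall_ne_zero_of_inBottleneck {c : G.Hidden → ℝ} {v : G.V}
    (hv : G.InBottleneck v) (hc : 0 < c ⟨v, hv.1⟩) :
    ∃ e : G.Edge, ∀ θ ∈ G.invariantSet c, θ e ≠ 0 := by
  obtain ⟨e, he⟩ := G.exists_filter_eq_singleton hv.2
  refine ⟨e, fun θ hθ hθe => hc.not_ge ?_⟩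
  have hrow := G.B_mulVec_apply (fun e => θ e ^ 2) hv.1
  rw [hθ, he, sum_singleton, hθe] at hrow
  rw [hrow]
  simpa using sum_nonneg fun e _ => sq_nonneg (θ e)

theorem exists_mem_edges_ne_of_not_inBottleneck {u w : G.V} (hw : w ∈ G.hidden)
    (hnot : ¬G.InBottleneck w) (h : (u, w) ∈ G.edges) (a : G.V) :
    ∃ u', (u', w) ∈ G.edges ∧ u' ≠ a := by
  have hmem : (u, w) ∈ G.edges.filter (fun e => e.2 = w) := mem_filter.2 ⟨h, rfl⟩
  have hcard : 1 < (G.edges.filter (fun e => e.2 = w)).card := by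
    have hne : (G.edges.filter (fun e => e.2 = w)).card ≠ 1 := fun h1 => hnot ⟨hw, h1⟩
    have := card_pos.2 ⟨_, hmem⟩
    omega
  obtain ⟨p, hp, hpa⟩ := exists_mem_ne hcard (a, w)
  obtain ⟨hpE, rfl⟩ := mem_filter.1 hp
  exact ⟨p.1, hpE, fun h' => hpa (by rw [← h'])⟩

theorem exists_mem_edges_ne_of_not_outBottleneck {u w : G.V} (hu : u ∈ G.hidden)
    (hnot : ¬G.OutBottleneck u) (h : (u, w) ∈ G.edges) (b : G.V) :
    ∃ w', (u, w') ∈ G.edges ∧ w' ≠ b := by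
  have hmem : (u, w) ∈ G.edges.filter (fun e => e.1 = u) := mem_filter.2 ⟨h, rfl⟩
  have hcard : 1 < (G.edges.filter (fun e => e.1 = u)).card := by
    have hne : (G.edges.filter (fun e => e.1 = u)).card ≠ 1 := fun h1 => hnot ⟨hu, h1⟩
    have := card_pos.2 ⟨_, hmem⟩
    omega
  obtain ⟨p, hp, hpb⟩ := exists_mem_ne hcard (u, b)
  obtain ⟨hpE, rfl⟩ := mem_filter.1 hp
  exact ⟨p.2, hpE, fun h' => hpb (by rw [← h'])⟩

variable {k : ℕ} {layer : G.V → ℕ}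

theorem mem_hidden_iff_of_layer (hle : ∀ v : G.V, layer v ≤ k + 1)
    (hVI : G.VI = univ.filter (fun v => layer v = 0))
    (hVO : G.VO = univ.filter (fun v => layer v = k + 1)) {v : G.V} :
    v ∈ G.hidden ↔ 1 ≤ layer v ∧ layer v ≤ k := by
  have := hle v
  simp only [hidden, hVI, hVO, mem_sdiff, mem_union, mem_filter, mem_univ, true_and, not_or]
  omega

/-- A unit of flow is routed from the inputs to `w` through nodes other than the endpoints of
`e₀`, which exist in every hidden layer since it has two nodes. -/
theorem nodeVec_mem_flowCone (hle : ∀ v : G.V, layer v ≤ k + 1)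
    (hVI : G.VI = univ.filter (fun v => layer v = 0))
    (hVO : G.VO = univ.filter (fun v => layer v = k + 1))
    (hE : ∀ a b : G.V, (a, b) ∈ G.edges ↔ layer b = layer a + 1)
    (hNE : ∀ i ≤ k + 1, (univ.filter (fun v : G.V => layer v = i)).Nonempty)
    (hbig : ∀ i, 1 ≤ i → i ≤ k → 2 ≤ (univ.filter (fun v : G.V => layer v = i)).card)
    (e₀ : G.Edge) (n : ℕ) :
    ∀ w, layer w = n + 1 → n + 1 ≤ k → (w ≠ e₀.1.2 ∨ ¬G.InBottleneck w) →
      G.nodeVec w ∈ G.flowCone e₀ := by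
  have hhid {v : G.V} := mem_hidden_iff_of_layer hle hVI hVO (v := v)
  have hab : layer e₀.1.1 ≠ layer e₀.1.2 := by have := (hE e₀.1.1 e₀.1.2).1 e₀.2; omega
  induction n with
  | zero =>
    intro w hw hk hwb
    obtain ⟨u, hu, hne⟩ : ∃ u, layer u = 0 ∧ (u, w) ≠ e₀.1 := by
      obtain ⟨u, hu⟩ := hNE 0 (Nat.zero_le _)
      rw [mem_filter] at hu
      rcases hwb with hwb | hwb
      · exact ⟨u, hu.2, ne_of_apply_ne Prod.snd hwb⟩
      · obtain ⟨u', hu', hne⟩ := G.exists_mem_edges_ne_of_not_inBottleneck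
          (hhid.2 (by omega)) hwb ((hE u w).2 (by omega)) e₀.1.1
        exact ⟨u', by have := (hE _ _).1 hu'; omega, ne_of_apply_ne Prod.fst hne⟩
    have h := G.sub_mem_flowCone ((hE u w).2 (by omega)) hne
    rwa [G.nodeVec_eq_zero (w := u) fun hu' => by have := hhid.1 hu'; omega, sub_zero] at h
  | succ n ih =>
    intro w hw hk _
    obtain ⟨u, hu, hua, hub⟩ := exists_layer_eq_ne_ne (hbig (n + 1) (by omega) (by omega)) hab
    have h := add_mem (ih u hu (by omega) (Or.inl hub))
      (G.sub_mem_flowCone ((hE u w).2 (by omega)) (ne_of_apply_ne Prod.fst hua))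
    rwa [add_sub_cancel] at h

/-- A unit of flow is routed from `w` to the outputs through nodes other than the endpoints of
`e₀`. -/
theorem neg_nodeVec_mem_flowCone (hle : ∀ v : G.V, layer v ≤ k + 1)
    (hVI : G.VI = univ.filter (fun v => layer v = 0))
    (hVO : G.VO = univ.filter (fun v => layer v = k + 1))
    (hE : ∀ a b : G.V, (a, b) ∈ G.edges ↔ layer b = layer a + 1)
    (hNE : ∀ i ≤ k + 1, (univ.filter (fun v : G.V => layer v = i)).Nonempty)
    (hbig : ∀ i, 1 ≤ i → i ≤ k → 2 ≤ (univ.filter (fun v : G.V => layer v = i)).card)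
    (e₀ : G.Edge) (n : ℕ) :
    ∀ w, layer w + n = k → 1 ≤ layer w → (w ≠ e₀.1.1 ∨ ¬G.OutBottleneck w) →
      -G.nodeVec w ∈ G.flowCone e₀ := by
  have hhid {v : G.V} := mem_hidden_iff_of_layer hle hVI hVO (v := v)
  have hab : layer e₀.1.1 ≠ layer e₀.1.2 := by have := (hE e₀.1.1 e₀.1.2).1 e₀.2; omega
  induction n with
  | zero =>
    intro w hw h1 hwa
    obtain ⟨u, hu, hne⟩ : ∃ u, layer u = k + 1 ∧ (w, u) ≠ e₀.1 := by
      obtain ⟨u, hu⟩ := hNE (k + 1) le_rfl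
      rw [mem_filter] at hu
      rcases hwa with hwa | hwa
      · exact ⟨u, hu.2, ne_of_apply_ne Prod.fst hwa⟩
      · obtain ⟨u', hu', hne⟩ := G.exists_mem_edges_ne_of_not_outBottleneck
          (hhid.2 ⟨h1, by omega⟩) hwa ((hE w u).2 (by omega)) e₀.1.2
        exact ⟨u', by have := (hE _ _).1 hu'; omega, ne_of_apply_ne Prod.snd hne⟩
    have h := G.sub_mem_flowCone ((hE w u).2 (by omega)) hne
    rwa [G.nodeVec_eq_zero (w := u) fun hu' => by have := hhid.1 hu'; omega, zero_sub] at h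
  | succ n ih =>
    intro w hw h1 _
    obtain ⟨u, hu, hua, hub⟩ :=
      exists_layer_eq_ne_ne (hbig (layer w + 1) (by omega) (by omega)) hab
    have h := add_mem (ih u (by omega) (by omega) (Or.inl hua))
      (G.sub_mem_flowCone ((hE w u).2 (by omega)) (ne_of_apply_ne Prod.snd hub))
    rwa [sub_eq_add_neg, neg_add_cancel_left] at h

theorem mem_flowCone_of_bottleneck_signs (hle : ∀ v : G.V, layer v ≤ k + 1)
    (hVI : G.VI = univ.filter (fun v => layer v = 0))
    (hVO : G.VO = univ.filter (fun v => layer v = k + 1))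
    (hE : ∀ a b : G.V, (a, b) ∈ G.edges ↔ layer b = layer a + 1)
    (hNE : ∀ i ≤ k + 1, (univ.filter (fun v : G.V => layer v = i)).Nonempty)
    (hbig : ∀ i, 1 ≤ i → i ≤ k → 2 ≤ (univ.filter (fun v : G.V => layer v = i)).card)
    {c : G.Hidden → ℝ} (hout : ∀ v : G.V, ∀ h : G.OutBottleneck v, 0 ≤ c ⟨v, h.1⟩)
    (hin : ∀ v : G.V, ∀ h : G.InBottleneck v, c ⟨v, h.1⟩ ≤ 0) (e₀ : G.Edge) :
    c ∈ G.flowCone e₀ := by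
  have hc : c = ∑ v, c v • G.nodeVec v := by
    funext w
    simp [Finset.sum_apply, nodeVec]
  rw [hc]
  refine Submodule.sum_mem _ fun v _ => ?_
  obtain ⟨h1, hk⟩ := (mem_hidden_iff_of_layer hle hVI hVO).1 v.2
  rcases lt_trichotomy (c v) 0 with hneg | hzero | hpos
  · rw [← neg_smul_neg]
    exact PointedCone.smul_mem _ (by linarith)
      (neg_nodeVec_mem_flowCone hle hVI hVO hE hNE hbig e₀ (k - layer v) v (by omega) h1
        (Or.inr fun hb => (hout v hb).not_gt hneg))
  · rw [hzero, zero_smul]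
    exact zero_mem _
  · exact PointedCone.smul_mem _ hpos.le
      (nodeVec_mem_flowCone hle hVI hVO hE hNE hbig e₀ (layer v - 1) v (by omega) (by omega)
        (Or.inr fun hb => (hin v hb).not_gt hpos))

end DagNet

theorem statement7_general (G : DagNet) (k : ℕ) (layer : G.V → ℕ)
    (hle : ∀ v : G.V, layer v ≤ k + 1)
    (hVI : G.VI = Finset.univ.filter (fun v => layer v = 0))
    (hVO : G.VO = Finset.univ.filter (fun v => layer v = k + 1))
    (hE : ∀ a b : G.V, (a, b) ∈ G.edges ↔ layer b = layer a + 1)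
    (hNE : ∀ i ≤ k + 1, (Finset.univ.filter (fun v : G.V => layer v = i)).Nonempty)
    (hbig : ∀ i, 1 ≤ i → i ≤ k →
      2 ≤ (Finset.univ.filter (fun v : G.V => layer v = i)).card)
    (c : G.Hidden → ℝ) :
    IsConnected (G.invariantSet c) ↔
      ((∀ v : G.V, ∀ h : G.OutBottleneck v, 0 ≤ c ⟨v, h.1⟩) ∧
       (∀ v : G.V, ∀ h : G.InBottleneck v, c ⟨v, h.1⟩ ≤ 0)) := by
  rw [G.invariantSet_eq_sqPreimage]
  constructor
  · intro hconn
    refine ⟨fun v hv => ?_, fun v hv => ?_⟩ <;> by_contra! hc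
    · obtain ⟨e, he⟩ := G.exists_forall_ne_zero_of_outBottleneck hv hc
      exact not_isConnected_sqPreimage he hconn
    · obtain ⟨e, he⟩ := G.exists_forall_ne_zero_of_inBottleneck hv hc
      exact not_isConnected_sqPreimage he hconn
  · rintro ⟨hout, hin⟩
    obtain ⟨u, hu⟩ := hNE 0 (Nat.zero_le _)
    obtain ⟨w, hw⟩ := hNE 1 (by omega)
    have : Nonempty G.Edge := ⟨⟨(u, w), (hE u w).2 (by simp_all)⟩⟩
    exact (isPathConnected_sqPreimage ((convex_singleton c).linear_preimage G.B.mulVecLin)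
      (DagNet.mem_flowCone_of_bottleneck_signs hle hVI hVO hE hNE hbig hout hin)).isConnected

/-- for a fully-connected MLP whose layers are all nonempty and
whose hidden layers all have at least two neurons, `H_G(c)` is connected iff
`c_v ≥ 0` for every out-bottleneck `v` and `c_v ≤ 0` for every
in-bottleneck `v`. -/
theorem statement7 (G : DagNet) (k : ℕ) (hk : 1 ≤ k) (layer : G.V → ℕ)
    (hle : ∀ v : G.V, layer v ≤ k + 1)
    (hVI : G.VI = Finset.univ.filter (fun v => layer v = 0))
    (hVO : G.VO = Finset.univ.filter (fun v => layer v = k + 1))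
    (hE : ∀ a b : G.V, (a, b) ∈ G.edges ↔ layer b = layer a + 1)
    (hNE : ∀ i ≤ k + 1, (Finset.univ.filter (fun v : G.V => layer v = i)).Nonempty)
    (hbig : ∀ i, 1 ≤ i → i ≤ k →
      2 ≤ (Finset.univ.filter (fun v : G.V => layer v = i)).card)
    (c : G.Hidden → ℝ) :
    IsConnected (G.invariantSet c) ↔
      ((∀ v : G.V, ∀ h : G.OutBottleneck v, 0 ≤ c ⟨v, h.1⟩) ∧
       (∀ v : G.V, ∀ h : G.InBottleneck v, c ⟨v, h.1⟩ ≤ 0)) :=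
  statement7_general G k layer hle hVI hVO hE hNE hbig c
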